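/- arXiv:1309.0154 — 2 statements merged into one kernel-verified Lean document; each statement's English description precedes it below -/
import Mathlib

section
/- Let f be the Fibonacci sequence with f_0 = f_1 = 1. For any real sequence x = (x_k) (with x_{−1} = 0), define y_k = (f_k/f_{k+1}) x_k − (f_{k+1}/f_k) x_{k−1}. Then x_k = ∑_{j=0}^{k} (f_{k+1}²/(f_j f_{j+1})) y_j for all k ∈ ℕ. -/
/-! With `z n = x (n - 1) / f_n²` (and `z 0 = 0`), the weighted term `y_j / (f_j f_{j+1})` is
exactly `z (j + 1) - z j`, so the sum defining `xseq` telescopes to `f_{k+1}² z (k + 1) = x k`. -/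

open Filter Topology

def fibo : ℕ → ℕ
  | 0 => 1
  | 1 => 1
  | n + 2 => fibo (n + 1) + fibo n

noncomputable def Fhat (x : ℕ → ℝ) : ℕ → ℝ
  | 0 => (fibo 0 : ℝ) / fibo 1 * x 0
  | k + 1 => (fibo (k + 1) : ℝ) / fibo (k + 2) * x (k + 1)
      - (fibo (k + 2) : ℝ) / fibo (k + 1) * x k

noncomputable def xseq (y : ℕ → ℝ) (k : ℕ) : ℝ :=
  ∑ j ∈ Finset.range (k + 1), ((fibo (k + 1) : ℝ) ^ 2 / ((fibo j : ℝ) * fibo (j + 1))) * y j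

lemma fibo_pos : ∀ n, 0 < fibo n
  | 0 => one_pos
  | 1 => one_pos
  | n + 2 => add_pos (fibo_pos (n + 1)) (fibo_pos n)

lemma fibo_cast_ne_zero (n : ℕ) : (fibo n : ℝ) ≠ 0 :=
  Nat.cast_ne_zero.mpr (fibo_pos n).ne'

noncomputable def fiboScaled (x : ℕ → ℝ) : ℕ → ℝ
  | 0 => 0
  | n + 1 => x n / (fibo (n + 1) : ℝ) ^ 2

lemma Fhat_div_fibo_mul_fibo (x : ℕ → ℝ) (j : ℕ) :
    Fhat x j / ((fibo j : ℝ) * fibo (j + 1)) = fiboScaled x (j + 1) - fiboScaled x j := by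
  have hj := fibo_cast_ne_zero j
  have hj₁ := fibo_cast_ne_zero (j + 1)
  cases j with
  | zero => simp [Fhat, fiboScaled, fibo]
  | succ j =>
    simp only [Fhat, fiboScaled]
    field_simp

lemma xseq_eq_sq_mul_sum (y : ℕ → ℝ) (k : ℕ) :
    xseq y k = (fibo (k + 1) : ℝ) ^ 2 *
      ∑ j ∈ Finset.range (k + 1), y j / ((fibo j : ℝ) * fibo (j + 1)) := by
  rw [xseq, Finset.mul_sum]
  refine Finset.sum_congr rfl fun j _ => ?_
  ring

theorem xseq_of_Fhat (x : ℕ → ℝ) (k : ℕ) :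
    x k = xseq (Fhat x) k := by
  rw [xseq_eq_sq_mul_sum]
  simp only [Fhat_div_fibo_mul_fibo]
  rw [Finset.sum_range_sub, fiboScaled, fiboScaled, sub_zero]
  field_simp [fibo_cast_ne_zero (k + 1)]
end

section
/- Let f be the Fibonacci sequence with f_0 = f_1 = 1, and let (p_k) be bounded strictly positive with M = max{1, sup p_k}. Define g(x) = sup_k |(f_k/f_{k+1})x_k − (f_{k+1}/f_k)x_{k−1}|^{p_k/M} on the space c_0(F̂,p) = {x : lim_n |(f_n/f_{n+1})x_n − (f_{n+1}/f_n)x_{n−1}|^{p_n} = 0} (with x_{−1}=0). Then g is a paranorm on c_0(F̂,p): g(0)=0, g(x)=g(−x), g(x+z) ≤ g(x)+g(z), and g(αx) ≤ max{1,|α|} g(x) for all scalars α. -/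
/-!
Since `Fhat` is linear, `g` is the functional `u ↦ ⨆ k, |u k| ^ t k` (with `t k = p k / M ∈ (0, 1]`)
composed with `Fhat`. For exponents in `(0, 1]` the map `a ↦ a ^ t` is subadditive on `[0, ∞)` and
`|α| ^ t ≤ max 1 |α|`, which gives the paranorm inequalities termwise. The convergence hypothesis
makes the family `|Fhat x k| ^ (p k / M) = (|Fhat x k| ^ p k) ^ (1 / M)` tend to `0`, hence bounded,
so the termwise bounds pass to the supremum.
-/

open Filter Topology

lemma Fhat_zero : Fhat 0 = 0 := by
  funext k; cases k <;> simp [Fhat]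

lemma Fhat_neg (x : ℕ → ℝ) : Fhat (-x) = -Fhat x := by
  funext k; cases k <;> (simp only [Fhat, Pi.neg_apply]; ring)

lemma Fhat_add (x z : ℕ → ℝ) : Fhat (x + z) = Fhat x + Fhat z := by
  funext k; cases k <;> (simp only [Fhat, Pi.add_apply]; ring)

lemma Fhat_smul (α : ℝ) (x : ℕ → ℝ) : Fhat (α • x) = α • Fhat x := by
  funext k; cases k <;> (simp only [Fhat, Pi.smul_apply, smul_eq_mul]; ring)

lemma Real.rpow_le_max_one {a t : ℝ} (ha : 0 ≤ a) (ht0 : 0 ≤ t) (ht1 : t ≤ 1) :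
    a ^ t ≤ max 1 a :=
  calc a ^ t ≤ (max 1 a) ^ t := Real.rpow_le_rpow ha (le_max_right _ _) ht0
    _ ≤ (max 1 a) ^ (1 : ℝ) := Real.rpow_le_rpow_of_exponent_le (le_max_left _ _) ht1
    _ = max 1 a := Real.rpow_one _

lemma bddAbove_range_abs_rpow_div_of_tendsto {u p : ℕ → ℝ} {M : ℝ} (hM : 0 < M)
    (hu : Tendsto (fun n => |u n| ^ p n) atTop (𝓝 0)) :
    BddAbove (Set.range fun k => |u k| ^ (p k / M)) := by
  have h := hu.rpow_const (p := 1 / M) (Or.inr (by positivity))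
  rw [Real.zero_rpow (by positivity)] at h
  refine h.bddAbove_range.mono ?_
  rintro _ ⟨k, rfl⟩
  exact ⟨k, by simp only [← Real.rpow_mul (abs_nonneg _), mul_one_div]⟩

noncomputable def supAbsRpow {ι : Type*} (t : ι → ℝ) (u : ι → ℝ) : ℝ :=
  ⨆ k, |u k| ^ t k

namespace supAbsRpow

variable {ι : Type*} {t : ι → ℝ}

lemma zero_eq [Nonempty ι] (ht : ∀ k, t k ≠ 0) : supAbsRpow t 0 = 0 := by
  simp [supAbsRpow, Real.zero_rpow (ht _)]

lemma neg_eq (u : ι → ℝ) : supAbsRpow t (-u) = supAbsRpow t u := by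
  simp [supAbsRpow]

lemma add_le [Nonempty ι] (ht0 : ∀ k, 0 ≤ t k) (ht1 : ∀ k, t k ≤ 1) {u v : ι → ℝ}
    (hu : BddAbove (Set.range fun k => |u k| ^ t k))
    (hv : BddAbove (Set.range fun k => |v k| ^ t k)) :
    supAbsRpow t (u + v) ≤ supAbsRpow t u + supAbsRpow t v := by
  refine ciSup_le fun k => ?_
  calc |u k + v k| ^ t k ≤ (|u k| + |v k|) ^ t k :=
        Real.rpow_le_rpow (abs_nonneg _) (abs_add_le _ _) (ht0 k)
    _ ≤ |u k| ^ t k + |v k| ^ t k :=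
        Real.rpow_add_le_add_rpow (abs_nonneg _) (abs_nonneg _) (ht0 k) (ht1 k)
    _ ≤ supAbsRpow t u + supAbsRpow t v := add_le_add (le_ciSup hu k) (le_ciSup hv k)

lemma smul_le [Nonempty ι] (ht0 : ∀ k, 0 ≤ t k) (ht1 : ∀ k, t k ≤ 1) {u : ι → ℝ}
    (hu : BddAbove (Set.range fun k => |u k| ^ t k)) (α : ℝ) :
    supAbsRpow t (α • u) ≤ max 1 |α| * supAbsRpow t u := by
  refine ciSup_le fun k => ?_
  calc |α • u k| ^ t k = |α| ^ t k * |u k| ^ t k := by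
        rw [smul_eq_mul, abs_mul, Real.mul_rpow (abs_nonneg _) (abs_nonneg _)]
    _ ≤ max 1 |α| * supAbsRpow t u :=
        mul_le_mul (Real.rpow_le_max_one (abs_nonneg _) (ht0 k) (ht1 k)) (le_ciSup hu k)
          (by positivity) (zero_le_one.trans (le_max_left _ _))

end supAbsRpow

theorem paranorm_c0_Fhat (p : ℕ → ℝ) (H : ℝ) (hp : ∀ k, 0 < p k) (hH : ∀ k, p k ≤ H)
    (M : ℝ) (hM : M = max 1 H)
    (g : (ℕ → ℝ) → ℝ) (hg : ∀ x, g x = ⨆ k, |Fhat x k| ^ (p k / M))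
    (x z : ℕ → ℝ)
    (hx : Tendsto (fun n => |Fhat x n| ^ p n) atTop (𝓝 0))
    (hz : Tendsto (fun n => |Fhat z n| ^ p n) atTop (𝓝 0)) :
    g 0 = 0 ∧ g x = g (-x) ∧ g (x + z) ≤ g x + g z ∧
      ∀ α : ℝ, g (α • x) ≤ max 1 |α| * g x := by
  have hM0 : 0 < M := hM ▸ lt_max_of_lt_left one_pos
  have ht0 : ∀ k, 0 < p k / M := fun k => div_pos (hp k) hM0
  have ht1 : ∀ k, p k / M ≤ 1 := fun k =>
    (div_le_one hM0).2 ((hH k).trans (hM ▸ le_max_right 1 H))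
  have hg' : g = fun y => supAbsRpow (fun k => p k / M) (Fhat y) := funext hg
  have hbx := bddAbove_range_abs_rpow_div_of_tendsto hM0 hx
  have hbz := bddAbove_range_abs_rpow_div_of_tendsto hM0 hz
  subst hg'
  refine ⟨?_, ?_, ?_, fun α => ?_⟩
  · simpa only [Fhat_zero] using supAbsRpow.zero_eq fun k => (ht0 k).ne'
  · simp only [Fhat_neg, supAbsRpow.neg_eq]
  · simpa only [Fhat_add] using
      supAbsRpow.add_le (fun k => (ht0 k).le) ht1 hbx hbz
  · simpa only [Fhat_smul] using supAbsRpow.smul_le (fun k => (ht0 k).le) ht1 hbx α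
end
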